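/- arXiv:math/9911093 — 2 statements merged into one kernel-verified Lean document; each statement's English description precedes it below -/
import Mathlib

section
/- Let K > 0 be a real number and let k ≥ 2 be an integer. Define, for 0 < t < π/√K, α(t) = (∫₀ᵗ (sin(√K·θ))^(k−1) dθ) / (sin(√K·t))^(k−1). Then α is a monotone increasing function of t on the interval (0, π/√K). -/
/-!
Substituting `θ = t u` gives
`α(t) = t * ∫₀¹ (sin (√K t u) / sin (√K t))^(k-1) du`.
For fixed `u ∈ [0, 1]` the ratio `sin (x u) / sin x` is monotone in `x ∈ (0, π)`: the sign of
its derivative is that of `(x u) cot (x u) - x cot x`, and `x cot x` is decreasing on `(0, π)`.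
So the integral is monotone in `t`, and the prefactor `t` makes `α` strictly increasing.
-/

open Real Set intervalIntegral

lemma hasDerivAt_mul_cos_div_sin {x : ℝ} (hx : sin x ≠ 0) :
    HasDerivAt (fun y => y * cos y / sin y) ((sin x * cos x - x) / sin x ^ 2) x := by
  have hnum : HasDerivAt (fun y => y * cos y) (1 * cos x + x * -sin x) x :=
    (hasDerivAt_id' x).mul (hasDerivAt_cos x)
  refine (hnum.div (hasDerivAt_sin x) hx).congr_deriv ?_
  congr 1
  linear_combination (-x) * sin_sq_add_cos_sq x

lemma antitoneOn_mul_cos_div_sin : AntitoneOn (fun x => x * cos x / sin x) (Ioo 0 π) := by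
  have hsin : ∀ x ∈ Ioo 0 π, 0 < sin x := fun x hx => sin_pos_of_pos_of_lt_pi hx.1 hx.2
  apply antitoneOn_of_hasDerivWithinAt_nonpos (convex_Ioo 0 π)
    (f' := fun x => (sin x * cos x - x) / sin x ^ 2)
    (ContinuousOn.div (by fun_prop) (by fun_prop) fun x hx => (hsin x hx).ne') <;>
    rw [interior_Ioo]
  · exact fun x hx => (hasDerivAt_mul_cos_div_sin (hsin x hx).ne').hasDerivWithinAt
  · intro x hx
    have hsin_lt : sin x < x := sin_lt hx.1
    refine div_nonpos_of_nonpos_of_nonneg ?_ (sq_nonneg _)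
    nlinarith [cos_le_one x, hsin x hx]

lemma hasDerivAt_sin_mul_div_sin (u : ℝ) {x : ℝ} (hx : sin x ≠ 0) :
    HasDerivAt (fun y => sin (y * u) / sin y)
      ((u * cos (x * u) * sin x - sin (x * u) * cos x) / sin x ^ 2) x := by
  refine (((hasDerivAt_mul_const u).sin).div (hasDerivAt_sin x) hx).congr_deriv ?_
  ring

lemma monotoneOn_sin_mul_div_sin {u : ℝ} (hu₀ : 0 ≤ u) (hu₁ : u ≤ 1) :
    MonotoneOn (fun x => sin (x * u) / sin x) (Ioo 0 π) := by
  have hsin : ∀ x ∈ Ioo 0 π, 0 < sin x := fun x hx => sin_pos_of_pos_of_lt_pi hx.1 hx.2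
  apply monotoneOn_of_hasDerivWithinAt_nonneg (convex_Ioo 0 π)
    (f' := fun x => (u * cos (x * u) * sin x - sin (x * u) * cos x) / sin x ^ 2)
    (ContinuousOn.div (by fun_prop) (by fun_prop) fun x hx => (hsin x hx).ne') <;>
    rw [interior_Ioo]
  · exact fun x hx => (hasDerivAt_sin_mul_div_sin u (hsin x hx).ne').hasDerivWithinAt
  intro x hx
  refine div_nonneg ?_ (sq_nonneg _)
  rcases hu₀.eq_or_lt with rfl | hu_pos
  · simp
  have hxu : x * u ∈ Ioo 0 π := ⟨mul_pos hx.1 hu_pos, by nlinarith [hx.1, hx.2]⟩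
  have hcot := antitoneOn_mul_cos_div_sin hxu hx (by nlinarith [hx.1])
  rw [div_le_div_iff₀ (hsin x hx) (hsin _ hxu)] at hcot
  nlinarith [hx.1]

lemma sin_mul_div_sin_pow_le {a b u : ℝ} (ha : 0 < a) (hab : a ≤ b) (hb : b < π)
    (hu₀ : 0 ≤ u) (hu₁ : u ≤ 1) (n : ℕ) :
    (sin (a * u) / sin a) ^ n ≤ (sin (b * u) / sin b) ^ n := by
  have haπ : a < π := hab.trans_lt hb
  have hau : 0 ≤ sin (a * u) :=
    sin_nonneg_of_nonneg_of_le_pi (mul_nonneg ha.le hu₀) (by nlinarith)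
  refine pow_le_pow_left₀ (div_nonneg hau (sin_pos_of_pos_of_lt_pi ha haπ).le) ?_ n
  exact monotoneOn_sin_mul_div_sin hu₀ hu₁ ⟨ha, haπ⟩ ⟨ha.trans_le hab, hb⟩ hab

lemma integral_sin_pow_div_sin_pow_eq (c t : ℝ) (n : ℕ) :
    (∫ θ in (0 : ℝ)..t, sin (c * θ) ^ n) / sin (c * t) ^ n =
      t * ∫ u in (0 : ℝ)..1, (sin (c * (t * u)) / sin (c * t)) ^ n := by
  have hsubst := smul_integral_comp_mul_left (a := 0) (b := 1) (fun θ => sin (c * θ) ^ n) t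
  rw [smul_eq_mul, mul_zero, mul_one] at hsubst
  simp_rw [div_pow, intervalIntegral.integral_div, ← mul_div_assoc, hsubst]

theorem strictMonoOn_integral_sin_pow_div_sin_pow {c : ℝ} (hc : 0 < c) (n : ℕ) :
    StrictMonoOn (fun t => (∫ θ in (0 : ℝ)..t, sin (c * θ) ^ n) / sin (c * t) ^ n)
      (Ioo 0 (π / c)) := by
  have hct : ∀ t ∈ Ioo 0 (π / c), c * t ∈ Ioo 0 π := fun t ht =>
    ⟨mul_pos hc ht.1, by rw [mul_comm]; exact (lt_div_iff₀ hc).mp ht.2⟩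
  have hint : ∀ t : ℝ, IntervalIntegrable
      (fun u => (sin (c * (t * u)) / sin (c * t)) ^ n) MeasureTheory.volume 0 1 := fun t =>
    (by fun_prop : Continuous fun u => (sin (c * (t * u)) / sin (c * t)) ^ n).intervalIntegrable ..
  intro s hs t ht hst
  simp only [integral_sin_pow_div_sin_pow_eq]
  have hmono : (∫ u in (0 : ℝ)..1, (sin (c * (s * u)) / sin (c * s)) ^ n) ≤
      ∫ u in (0 : ℝ)..1, (sin (c * (t * u)) / sin (c * t)) ^ n := by
    refine integral_mono_on zero_le_one (hint s) (hint t) fun u hu => ?_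
    simp only [← mul_assoc]
    exact sin_mul_div_sin_pow_le (hct s hs).1 (mul_le_mul_of_nonneg_left hst.le hc.le)
      (hct t ht).2 hu.1 hu.2 n
  have hpos : 0 < ∫ u in (0 : ℝ)..1, (sin (c * (t * u)) / sin (c * t)) ^ n := by
    refine intervalIntegral_pos_of_pos_on (hint t) (fun u hu => ?_) zero_lt_one
    have hctu : c * (t * u) ∈ Ioo 0 π := by
      rw [← mul_assoc]
      exact ⟨mul_pos (hct t ht).1 hu.1, by nlinarith [(hct t ht).1, (hct t ht).2, hu.2]⟩
    exact pow_pos (div_pos (sin_pos_of_pos_of_lt_pi hctu.1 hctu.2)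
      (sin_pos_of_pos_of_lt_pi (hct t ht).1 (hct t ht).2)) n
  calc s * ∫ u in (0 : ℝ)..1, (sin (c * (s * u)) / sin (c * s)) ^ n
      ≤ s * ∫ u in (0 : ℝ)..1, (sin (c * (t * u)) / sin (c * t)) ^ n :=
        mul_le_mul_of_nonneg_left hmono hs.1.le
    _ < t * ∫ u in (0 : ℝ)..1, (sin (c * (t * u)) / sin (c * t)) ^ n :=
        mul_lt_mul_of_pos_right hst hpos

theorem alpha_strict_mono_general (K : ℝ) (hK : 0 < K) (k : ℕ) :
    StrictMonoOn
      (fun t => (∫ θ in (0:ℝ)..t, Real.sin (Real.sqrt K * θ) ^ (k - 1)) /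
        Real.sin (Real.sqrt K * t) ^ (k - 1))
      (Set.Ioo 0 (Real.pi / Real.sqrt K)) :=
  strictMonoOn_integral_sin_pow_div_sin_pow (Real.sqrt_pos.mpr hK) (k - 1)

/-- The function `α(t) = (∫₀ᵗ sin(√K θ)^(k-1) dθ) / sin(√K t)^(k-1)` is strictly
increasing on `(0, π/√K)` for `K > 0` and `k ≥ 2` (key analytic fact in the
proof of Theorem 2.0.2 of the paper). -/
theorem alpha_strict_mono (K : ℝ) (hK : 0 < K) (k : ℕ) (hk : 2 ≤ k) :
    StrictMonoOn
      (fun t => (∫ θ in (0:ℝ)..t, Real.sin (Real.sqrt K * θ) ^ (k - 1)) /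
        Real.sin (Real.sqrt K * t) ^ (k - 1))
      (Set.Ioo 0 (Real.pi / Real.sqrt K)) :=
  alpha_strict_mono_general K hK k
end

section
/- There is no holomorphic function f from the open half disk D = { z ∈ ℂ : 0 < |z| < 1 and 0 < Im z } to itself such that |f(z)| ≤ |z|² for all z ∈ D. That is, there is no function f : ℂ → ℂ which is differentiable (in the complex sense) on D, maps D into D, and satisfies |f(z)| ≤ |z|² on D. -/
/-!
Since `f` maps the half disk into the upper half plane, the Schwarz lemma applied to the
Cayley transform `(f - f c) / (f - conj (f c))` on the ball `B(c, R)` gives a Harnack-type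
bound: `‖f‖` shrinks by at most a factor `3` between `c` and a point at distance `R / 2`.
Along the points `i / 2^(n+1)` this keeps `‖f (i / 2)‖ ≤ 3^n ‖f (i / 2^(n+1))‖`, while
`‖f z‖ ≤ ‖z‖²` makes the right side at most `(3/4)^n / 4`, so `f (i / 2) = 0`,
which is not a point of the half disk.
-/

open Metric Complex ComplexConjugate

abbrev halfDisk : Set ℂ := {z : ℂ | 0 < ‖z‖ ∧ ‖z‖ < 1 ∧ 0 < z.im}

lemma norm_sub_lt_norm_sub_conj {u a : ℂ} (hu : 0 < u.im) (ha : 0 < a.im) :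
    ‖u - a‖ < ‖u - conj a‖ := by
  apply lt_of_pow_lt_pow_left₀ 2 (norm_nonneg _)
  simp only [Complex.sq_norm, normSq_apply, sub_re, sub_im, conj_re, conj_im]
  nlinarith

lemma sub_dist_mul_norm_le_add_dist_mul_norm {f : ℂ → ℂ} {c w : ℂ} {R : ℝ}
    (hd : DifferentiableOn ℂ f (ball c R)) (him : ∀ z ∈ ball c R, 0 < (f z).im)
    (hw : w ∈ ball c R) :
    (R - dist w c) * ‖f c‖ ≤ (R + dist w c) * ‖f w‖ := by
  have hR : 0 < R := pos_of_mem_ball hw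
  set a := f c
  have hcay : ∀ z ∈ ball c R, ‖f z - a‖ < ‖f z - conj a‖ := fun z hz =>
    norm_sub_lt_norm_sub_conj (him z hz) (him c (mem_ball_self hR))
  have hden : ∀ z ∈ ball c R, f z - conj a ≠ 0 := fun z hz =>
    norm_pos_iff.mp ((norm_nonneg _).trans_lt (hcay z hz))
  set h : ℂ → ℂ := fun z => (f z - a) / (f z - conj a)
  have hmaps : Set.MapsTo h (ball c R) (closedBall (h c) 1) := by
    intro z hz
    simp only [h, a, sub_self, zero_div, mem_closedBall, dist_zero_right, norm_div]
    exact (div_lt_one ((norm_nonneg _).trans_lt (hcay z hz))).mpr (hcay z hz) |>.le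
  have hhd : DifferentiableOn ℂ h (ball c R) := (hd.sub_const a).div (hd.sub_const _) hden
  have hschwarz := dist_le_div_mul_dist_of_mapsTo_ball hhd hmaps hw
  have hwa : R * ‖f w - a‖ ≤ dist w c * ‖f w - conj a‖ := by
    simp only [h, a, sub_self, zero_div, dist_zero_right, norm_div] at hschwarz
    rw [div_le_iff₀ ((norm_nonneg _).trans_lt (hcay w hw)), one_div_mul_eq_div,
      div_mul_eq_mul_div, le_div_iff₀ hR] at hschwarz
    linarith
  have hconj : ‖f w - conj a‖ ≤ ‖f w‖ + ‖a‖ := (norm_sub_le _ _).trans_eq (by rw [norm_conj])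
  have ha : ‖a‖ ≤ ‖f w‖ + ‖f w - a‖ := by
    simpa using norm_sub_le (f w) (f w - a)
  nlinarith [dist_nonneg (x := w) (y := c)]

lemma ball_ofReal_mul_I_subset_halfDisk {t : ℝ} (ht : t ≤ 1 / 2) :
    ball ((t : ℂ) * I) t ⊆ halfDisk := by
  intro x hx
  rw [mem_ball, dist_eq] at hx
  have ht0 : 0 < t := (norm_nonneg _).trans_lt hx
  have him : 0 < x.im := by
    have := neg_abs_le (x - t * I).im
    have := (abs_im_le_norm (x - t * I)).trans_lt hx
    simp only [sub_im, mul_im, ofReal_re, I_im, ofReal_im, I_re] at *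
    linarith
  refine ⟨norm_pos_iff.mpr <| by rintro rfl; simp at him, ?_, him⟩
  calc ‖x‖ ≤ ‖x - t * I‖ + ‖(t : ℂ) * I‖ := norm_le_norm_sub_add _ _
    _ < t + t := add_lt_add_of_lt_of_le hx (by simp [abs_of_pos ht0])
    _ ≤ 1 := by linarith

lemma norm_le_three_pow_mul_norm {f : ℂ → ℂ} (hd : DifferentiableOn ℂ f halfDisk)
    (him : ∀ z ∈ halfDisk, 0 < (f z).im) {t : ℝ} (ht : 0 < t) (ht' : t ≤ 1 / 2) (n : ℕ) :
    ‖f (t * I)‖ ≤ 3 ^ n * ‖f ((t / 2 ^ n : ℝ) * I)‖ := by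
  induction n with
  | zero => simp
  | succ n ih =>
    set s := t / 2 ^ n
    have hs : 0 < s := by positivity
    have hst : s ≤ 1 / 2 := (div_le_self ht.le (one_le_pow₀ one_le_two)).trans ht'
    have hball := ball_ofReal_mul_I_subset_halfDisk hst
    have hdist : dist ((s / 2 : ℝ) * I) ((s : ℂ) * I) = s / 2 := by
      rw [dist_eq, ← sub_mul, ← ofReal_sub, norm_mul, norm_I, mul_one, norm_real,
        Real.norm_eq_abs, abs_sub_comm, abs_of_pos (by linarith)]
      ring
    have hharnack := sub_dist_mul_norm_le_add_dist_mul_norm (hd.mono hball)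
      (fun z hz => him z (hball hz)) (w := (s / 2 : ℝ) * I) (by rw [mem_ball, hdist]; linarith)
    rw [hdist] at hharnack
    rw [show t / 2 ^ (n + 1) = s / 2 by rw [pow_succ, div_div]]
    calc ‖f (t * I)‖ ≤ 3 ^ n * ‖f (s * I)‖ := ih
      _ ≤ 3 ^ n * (3 * ‖f ((s / 2 : ℝ) * I)‖) := by gcongr; nlinarith
      _ = _ := by ring

/-- Lemma 3.4.1 of the paper: there is no holomorphic function `f` from the open
half disk `D = {z : 0 < |z| < 1, 0 < Im z}` to itself with `|f(z)| ≤ |z|²`. -/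
theorem no_holomorphic_half_disk :
    ¬ ∃ f : ℂ → ℂ,
      (∀ z ∈ {z : ℂ | 0 < ‖z‖ ∧ ‖z‖ < 1 ∧ 0 < z.im},
        DifferentiableAt ℂ f z) ∧
      (∀ z ∈ {z : ℂ | 0 < ‖z‖ ∧ ‖z‖ < 1 ∧ 0 < z.im},
        f z ∈ {z : ℂ | 0 < ‖z‖ ∧ ‖z‖ < 1 ∧ 0 < z.im}) ∧
      (∀ z ∈ {z : ℂ | 0 < ‖z‖ ∧ ‖z‖ < 1 ∧ 0 < z.im},
        ‖f z‖ ≤ ‖z‖ ^ 2) := by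
  rintro ⟨f, hd, hmaps, hle⟩
  have hmem : ∀ n : ℕ, (((1 / 2 : ℝ) / 2 ^ n : ℝ) : ℂ) * I ∈ halfDisk := fun n =>
    ball_ofReal_mul_I_subset_halfDisk (div_le_self (by norm_num) (one_le_pow₀ one_le_two))
      (mem_ball_self (by positivity))
  have hbound : ∀ n : ℕ, ‖f ((1 / 2 : ℝ) * I)‖ ≤ (3 / 4) ^ n / 4 := fun n =>
    calc ‖f ((1 / 2 : ℝ) * I)‖
        ≤ 3 ^ n * ‖f (((1 / 2 : ℝ) / 2 ^ n : ℝ) * I)‖ :=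
          norm_le_three_pow_mul_norm (fun z hz => (hd z hz).differentiableWithinAt)
            (fun z hz => (hmaps z hz).2.2) (by norm_num) le_rfl n
      _ ≤ 3 ^ n * ‖(((1 / 2 : ℝ) / 2 ^ n : ℝ) : ℂ) * I‖ ^ 2 := by gcongr; exact hle _ (hmem n)
      _ = (3 / 4) ^ n / 4 := by
        have h4 : (4 : ℝ) ^ n = (2 ^ n) ^ 2 := by rw [← pow_mul, mul_comm, pow_mul]; norm_num
        rw [norm_mul, norm_I, mul_one, norm_real, Real.norm_of_nonneg (by positivity),
          div_pow (3 : ℝ), h4]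
        field_simp
        ring
  have hzero : ‖f ((1 / 2 : ℝ) * I)‖ ≤ 0 := by
    simpa using ge_of_tendsto' ((tendsto_pow_atTop_nhds_zero_of_lt_one
      (by norm_num) (by norm_num : (3 / 4 : ℝ) < 1)).div_const 4) hbound
  exact (hmaps _ (hmem 0)).1.not_ge (by simpa using hzero)
end
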